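/- For every prime p ≡ 3 (mod 4) with p ≥ 7 there exists a circulant complex Hadamard matrix of order p that is not equivalent to the Fourier matrix F_p. -/

import Mathlib

open Matrix

/-- `H` is a complex Hadamard matrix: unimodular entries and `H Hᴴ = n • I`. -/
def IsCHadamard {n : Type*} [Fintype n] [DecidableEq n] (H : Matrix n n ℂ) : Prop :=
  (∀ i j, ‖H i j‖ = 1) ∧
    H * H.conjTranspose = (Fintype.card n : ℂ) • 1

/-- Equivalence of complex Hadamard matrices: `H = P₁ D₁ K D₂ P₂` with permutation
matrices `P₁, P₂` and unitary diagonal matrices `D₁, D₂`. -/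
def HadEquiv {n : Type*} [Fintype n] [DecidableEq n] (H K : Matrix n n ℂ) : Prop :=
  ∃ (σ τ : Equiv.Perm n) (d₁ d₂ : n → ℂ),
    (∀ i, ‖d₁ i‖ = 1) ∧ (∀ i, ‖d₂ i‖ = 1) ∧
    H = σ.permMatrix ℂ * Matrix.diagonal d₁ * K * Matrix.diagonal d₂ * τ.permMatrix ℂ

/-- A matrix is circulant if its `(j,k)` entry depends only on `k - j`. -/
def IsCirculant {p : ℕ} (H : Matrix (Fin p) (Fin p) ℂ) : Prop :=
  ∃ g : Fin p → ℂ, ∀ j k, H j k = g (k - j)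

/-- The Fourier matrix of order `p`. -/
noncomputable def FourierMatrix (p : ℕ) : Matrix (Fin p) (Fin p) ℂ :=
  Matrix.of fun j k =>
    Complex.exp (2 * Real.pi * Complex.I * ((j : ℕ) * (k : ℕ)) / p)

/-!
Björck's construction. Let `χ` be the quadratic character of `𝔽_p` and let `α` be the unimodular
number with real part `(1 - p) / (1 + p)`. The circulant matrix whose first row is `1` on the
squares (including `0`) and `α` on the non-squares is Hadamard: writing its row as
`(1 + α)/2 + (1 - α)/2 · ψ` with `ψ = χ + δ₀ = ±1`, orthogonality of distinct rows reduces to the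
fact that `ψ` has constant off-peak autocorrelation `-1` (a consequence of `J(χ, χ) = -χ(-1)` and
`χ(-1) = -1` for `p ≡ 3 mod 4`), and the value of `Re α` is exactly what makes the sum vanish.

Equivalence preserves the products `H i j * H k l * conj (H i l) * conj (H k j)` up to
relabelling of indices; for `F_p` these are `p`-th roots of unity, while for Björck's matrix one
of them equals `α`. But `α` is not a root of unity once `p > 3`: otherwise `α + conj α`, a
rational number strictly between `-2` and `-1`, would be an algebraic integer.
-/

open ComplexConjugate Finset

noncomputable def bjorckNumber (q : ℕ) : ℂ := ⟨(1 - q) / (1 + q), 2 * √q / (1 + q)⟩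

lemma bjorckNumber_mul_conj (q : ℕ) : bjorckNumber q * conj (bjorckNumber q) = 1 := by
  have hq : (1 + q : ℝ) ≠ 0 := by positivity
  have hsqrt := Real.sq_sqrt (Nat.cast_nonneg (α := ℝ) q)
  rw [Complex.mul_conj, Complex.normSq_apply, Complex.ofReal_eq_one]
  simp only [bjorckNumber]
  field_simp
  linear_combination 4 * hsqrt

lemma norm_bjorckNumber (q : ℕ) : ‖bjorckNumber q‖ = 1 := by
  have h := bjorckNumber_mul_conj q
  rw [Complex.mul_conj, Complex.ofReal_eq_one] at h
  rw [Complex.norm_def, h, Real.sqrt_one]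

lemma bjorckNumber_add_conj (q : ℕ) :
    bjorckNumber q + conj (bjorckNumber q) = ((2 * (1 - q) / (1 + q) : ℚ) : ℂ) := by
  rw [Complex.add_conj]
  push_cast [bjorckNumber]
  ring

lemma exists_int_eq_of_pow_eq_one {z : ℂ} {n : ℕ} (hn : n ≠ 0) (hz : z ^ n = 1) {r : ℚ}
    (hr : z + conj z = r) : ∃ k : ℤ, r = k := by
  have hint : IsIntegral ℤ z := ⟨_, Polynomial.monic_X_pow_sub_C 1 hn, by simp [hz]⟩
  have hconj : IsIntegral ℤ (conj z) := by
    simpa using hint.map (starRingEnd ℂ).toIntAlgHom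
  obtain ⟨k, hk⟩ := ((hint.add hconj).exists_int_iff_exists_rat).1 ⟨r, hr⟩
  exact ⟨k, by exact_mod_cast hr.symm.trans hk⟩

lemma bjorckNumber_pow_ne_one {q : ℕ} (hq : 3 < q) {n : ℕ} (hn : n ≠ 0) :
    bjorckNumber q ^ n ≠ 1 := by
  intro hpow
  obtain ⟨k, hk⟩ := exists_int_eq_of_pow_eq_one hn hpow (bjorckNumber_add_conj q)
  have hq' : (3 : ℚ) < q := by exact_mod_cast hq
  have hlo : (-2 : ℚ) < k := by rw [← hk, lt_div_iff₀ (by positivity)]; linarith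
  have hhi : (k : ℚ) < -1 := by rw [← hk, div_lt_iff₀ (by positivity)]; linarith
  norm_cast at hlo hhi
  omega

section FiniteField

variable {F : Type*} [Field F] [Fintype F]

lemma ringChar_ne_two_of_card_mod_four (hF : Fintype.card F % 4 = 3) : ringChar F ≠ 2 := by
  rw [Ne, FiniteField.even_card_iff_char_two]
  omega

variable [DecidableEq F]

lemma quadraticChar_neg_one_of_card_mod_four (hF : Fintype.card F % 4 = 3) :
    quadraticChar F (-1) = -1 :=
  quadraticChar_neg_one_iff_not_isSquare.2 (FiniteField.isSquare_neg_one_iff.not_left.2 hF)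

lemma sum_quadraticChar_add_mul_quadraticChar (hF : ringChar F ≠ 2) {s : F} (hs : s ≠ 0) :
    ∑ x, quadraticChar F (x + s) * quadraticChar F x = -1 := by
  set χ := quadraticChar F
  have hJ : jacobiSum χ χ = -χ (-1) := by
    simpa only [(quadraticChar_isQuadratic F).inv] using
      jacobiSum_nontrivial_inv (quadraticChar_ne_one hF)
  have hsq : χ (-1) * χ (-1) = 1 := by
    rw [← map_mul, neg_one_mul, neg_neg, map_one]
  have hsub : ∀ y, χ (-s * y + s) * χ (-s * y) = χ (-1) * (χ y * χ (1 - y)) := by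
    intro y
    rw [show -s * y + s = s * (1 - y) by ring, show -s * y = -1 * s * y by ring, map_mul,
      map_mul, map_mul]
    linear_combination (χ (-1) * χ y * χ (1 - y)) * quadraticChar_sq_one hs
  calc ∑ x, χ (x + s) * χ x
      = ∑ y, χ (-s * y + s) * χ (-s * y) :=
        (Fintype.sum_bijective _ (mulLeft_bijective₀ _ (neg_ne_zero.2 hs)) _ _ fun _ ↦ rfl).symm
    _ = χ (-1) * jacobiSum χ χ := by simp only [hsub, ← mul_sum, jacobiSum]
    _ = -1 := by rw [hJ]; linear_combination -hsq

variable (F) in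
def quadraticSign (x : F) : ℤ :=
  quadraticChar F x + if x = 0 then 1 else 0

lemma quadraticSign_of_neg_one {x : F} (hx : quadraticChar F x = -1) :
    quadraticSign F x = -1 := by
  have : x ≠ 0 := by rintro rfl; simp at hx
  simp [quadraticSign, hx, this]

lemma quadraticSign_of_ne_neg_one {x : F} (hx : quadraticChar F x ≠ -1) :
    quadraticSign F x = 1 := by
  rcases eq_or_ne x 0 with rfl | h0
  · simp [quadraticSign]
  · simp [quadraticSign, h0, (quadraticChar_dichotomy h0).resolve_right hx]

lemma sum_quadraticSign (hF : ringChar F ≠ 2) : ∑ x, quadraticSign F x = 1 := by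
  simp only [quadraticSign, sum_add_distrib, quadraticChar_sum_zero hF, sum_ite_eq', mem_univ,
    if_true, zero_add]

lemma sum_quadraticSign_add_mul_quadraticSign (hF : Fintype.card F % 4 = 3) {s : F}
    (hs : s ≠ 0) : ∑ x, quadraticSign F (x + s) * quadraticSign F x = -1 := by
  have hodd : quadraticChar F (-s) = -quadraticChar F s := by
    rw [neg_eq_neg_one_mul, map_mul, quadraticChar_neg_one_of_card_mod_four hF, neg_one_mul]
  simp only [quadraticSign, add_mul, mul_add, sum_add_distrib, mul_ite, ite_mul, mul_one, one_mul,
    mul_zero, zero_mul, add_eq_zero_iff_eq_neg, sum_ite_eq', mem_univ, if_true,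
    sum_quadraticChar_add_mul_quadraticChar (ringChar_ne_two_of_card_mod_four hF) hs, zero_add,
    hodd, zero_eq_neg, hs, if_false]
  ring

end FiniteField

lemma isCHadamard_of_sum_add_mul_conj {G : Type*} [AddCommGroup G] [Fintype G] [DecidableEq G]
    {f : G → ℂ} (hf : ∀ x, ‖f x‖ = 1) (horth : ∀ s ≠ 0, ∑ x, f (x + s) * conj (f x) = 0) :
    IsCHadamard (of fun j k : G ↦ f (k - j)) := by
  refine ⟨fun j k ↦ hf _, ?_⟩
  ext j k
  have hshift : ((of fun j k : G ↦ f (k - j)) * (of fun j k : G ↦ f (k - j))ᴴ) j k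
      = ∑ x, f (x + (k - j)) * conj (f x) := by
    rw [mul_apply, ← Equiv.sum_comp (Equiv.addRight k)]
    simp only [Equiv.coe_addRight, conjTranspose_apply, of_apply, add_sub_cancel_right,
      add_sub_assoc', RCLike.star_def]
  rw [hshift]
  rcases eq_or_ne j k with rfl | hjk
  · simp [Complex.mul_conj, Complex.normSq_eq_norm_sq, hf]
  · rw [horth _ (sub_ne_zero.2 hjk.symm), Matrix.smul_apply, one_apply_ne hjk, smul_zero]

lemma IsCHadamard.submatrix {m n : Type*} [Fintype m] [DecidableEq m] [Fintype n]
    [DecidableEq n] {H : Matrix n n ℂ} (hH : IsCHadamard H) (e : m ≃ n) :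
    IsCHadamard (H.submatrix e e) := by
  refine ⟨fun i j ↦ hH.1 _ _, ?_⟩
  rw [conjTranspose_submatrix, submatrix_mul_equiv, hH.2, Fintype.card_congr e]
  ext i j
  simp [one_apply, e.injective.eq_iff]

section Bjorck

variable {F : Type*} [Field F] [Fintype F] [DecidableEq F]

variable (F) in
noncomputable def bjorck (x : F) : ℂ :=
  if quadraticChar F x = -1 then bjorckNumber (Fintype.card F) else 1

variable (F) in
noncomputable def bjorckMatrix : Matrix F F ℂ :=
  of fun j k ↦ bjorck F (k - j)

lemma norm_bjorck (x : F) : ‖bjorck F x‖ = 1 := by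
  unfold bjorck
  split_ifs
  · exact norm_bjorckNumber _
  · exact norm_one

lemma bjorck_eq (x : F) : bjorck F x = (1 + bjorckNumber (Fintype.card F)) / 2
    + (1 - bjorckNumber (Fintype.card F)) / 2 * quadraticSign F x := by
  unfold bjorck
  split_ifs with hx
  · rw [quadraticSign_of_neg_one hx]; push_cast; ring
  · rw [quadraticSign_of_ne_neg_one hx]; push_cast; ring

lemma sum_bjorck_add_mul_conj (hF : Fintype.card F % 4 = 3) {s : F} (hs : s ≠ 0) :
    ∑ x, bjorck F (x + s) * conj (bjorck F x) = 0 := by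
  set q := Fintype.card F
  set α := bjorckNumber q
  have hmul : α * conj α = 1 := bjorckNumber_mul_conj q
  have hadd : (1 + q) * (α + conj α) = 2 * (1 - q) := by
    rw [bjorckNumber_add_conj]; push_cast; exact mul_div_cancel₀ _ (by norm_cast; omega)
  have hsum : ∑ x, (quadraticSign F x : ℂ) = 1 := by
    exact_mod_cast sum_quadraticSign (ringChar_ne_two_of_card_mod_four hF)
  have hsum_shift : ∑ x, (quadraticSign F (x + s) : ℂ) = 1 :=
    (Equiv.sum_comp (Equiv.addRight s) _).trans hsum
  have hcorr : ∑ x, (quadraticSign F (x + s) : ℂ) * quadraticSign F x = -1 := by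
    exact_mod_cast sum_quadraticSign_add_mul_quadraticSign hF hs
  have hexpand : ∀ x, bjorck F (x + s) * conj (bjorck F x)
      = (1 + α) * (1 + conj α) / 4 + (1 - α) * (1 + conj α) / 4 * quadraticSign F (x + s)
        + (1 + α) * (1 - conj α) / 4 * quadraticSign F x
        + (1 - α) * (1 - conj α) / 4 * (quadraticSign F (x + s) * quadraticSign F x) := by
    intro x
    simp only [bjorck_eq, map_add, map_mul, map_div₀, map_sub, map_one, map_ofNat, map_intCast]
    ring
  simp only [hexpand, sum_add_distrib, ← mul_sum, hsum, hsum_shift, hcorr, sum_const, card_univ,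
    nsmul_eq_mul]
  linear_combination ((q : ℂ) - 3) / 4 * hmul + hadd / 4

lemma isCHadamard_bjorckMatrix (hF : Fintype.card F % 4 = 3) : IsCHadamard (bjorckMatrix F) :=
  isCHadamard_of_sum_add_mul_conj norm_bjorck fun _ ↦ sum_bjorck_add_mul_conj hF

end Bjorck

def haagerupInvariant {n : Type*} (H : Matrix n n ℂ) (i j k l : n) : ℂ :=
  H i j * H k l * conj (H i l) * conj (H k j)

lemma haagerupInvariant_submatrix {m n : Type*} (H : Matrix n n ℂ) (e f : m → n) (i j k l : m) :
    haagerupInvariant (H.submatrix e f) i j k l = haagerupInvariant H (e i) (f j) (e k) (f l) :=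
  rfl

lemma permMatrix_mul_diagonal_mul_apply {n : Type*} [Fintype n] [DecidableEq n]
    (σ τ : Equiv.Perm n) (d₁ d₂ : n → ℂ) (K : Matrix n n ℂ) (i j : n) :
    (σ.permMatrix ℂ * diagonal d₁ * K * diagonal d₂ * τ.permMatrix ℂ) i j
      = d₁ (σ i) * K (σ i) (τ.symm j) * d₂ (τ.symm j) := by
  rw [PEquiv.mul_toMatrix_toPEquiv, submatrix_apply, id_eq, mul_diagonal, Matrix.mul_assoc,
    PEquiv.toMatrix_toPEquiv_mul, submatrix_apply, id_eq, diagonal_mul]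

lemma HadEquiv.exists_haagerupInvariant_eq {n : Type*} [Fintype n] [DecidableEq n]
    {H K : Matrix n n ℂ} (h : HadEquiv H K) (i j k l : n) :
    ∃ i' j' k' l', haagerupInvariant H i j k l = haagerupInvariant K i' j' k' l' := by
  obtain ⟨σ, τ, d₁, d₂, hd₁, hd₂, rfl⟩ := h
  have hunit : ∀ {z : ℂ}, ‖z‖ = 1 → z * conj z = 1 := fun hz ↦ by
    rw [Complex.mul_conj', hz]; norm_num
  refine ⟨σ i, τ.symm j, σ k, τ.symm l, ?_⟩
  calc haagerupInvariant (σ.permMatrix ℂ * diagonal d₁ * K * diagonal d₂ * τ.permMatrix ℂ) i j k l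
      = haagerupInvariant K (σ i) (τ.symm j) (σ k) (τ.symm l)
        * (d₁ (σ i) * conj (d₁ (σ i))) * (d₁ (σ k) * conj (d₁ (σ k)))
        * (d₂ (τ.symm j) * conj (d₂ (τ.symm j))) * (d₂ (τ.symm l) * conj (d₂ (τ.symm l))) := by
        simp only [haagerupInvariant, permMatrix_mul_diagonal_mul_apply, map_mul]
        ring
    _ = haagerupInvariant K (σ i) (τ.symm j) (σ k) (τ.symm l) := by
        rw [hunit (hd₁ _), hunit (hd₁ _), hunit (hd₂ _), hunit (hd₂ _)]
        ring

lemma fourierMatrix_apply_pow {p : ℕ} (hp : p ≠ 0) (j k : Fin p) :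
    FourierMatrix p j k ^ p = 1 := by
  rw [FourierMatrix, of_apply, ← Complex.exp_nat_mul,
    show (p : ℂ) * (2 * Real.pi * Complex.I * ((j : ℕ) * (k : ℕ)) / p)
      = ((j : ℕ) * (k : ℕ) : ℕ) * (2 * Real.pi * Complex.I) by push_cast; field_simp]
  exact Complex.exp_nat_mul_two_pi_mul_I _

lemma not_hadEquiv_fourierMatrix_of_haagerupInvariant_pow_ne_one {p : ℕ} (hp : p ≠ 0)
    {H : Matrix (Fin p) (Fin p) ℂ} {i j k l : Fin p}
    (hH : haagerupInvariant H i j k l ^ p ≠ 1) : ¬ HadEquiv H (FourierMatrix p) := by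
  intro h
  obtain ⟨i', j', k', l', heq⟩ := h.exists_haagerupInvariant_eq i j k l
  apply hH
  rw [heq]
  simp only [haagerupInvariant, mul_pow, ← map_pow, fourierMatrix_apply_pow hp, map_one, mul_one]

lemma haagerupInvariant_bjorckMatrix {F : Type*} [Field F] [Fintype F] [DecidableEq F]
    (hF : Fintype.card F % 4 = 3) {n : F} (hn : quadraticChar F n = -1) :
    haagerupInvariant (bjorckMatrix F) 0 n n 0 = bjorckNumber (Fintype.card F) := by
  have hneg : quadraticChar F (-n) = 1 := by
    rw [neg_eq_neg_one_mul, map_mul, quadraticChar_neg_one_of_card_mod_four hF, hn]; rfl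
  simp only [haagerupInvariant, bjorckMatrix, bjorck, of_apply, sub_zero, zero_sub, sub_self, hn,
    hneg, quadraticChar_zero]
  norm_num

theorem stmt4 (p : ℕ) (hp : p.Prime) (hmod : p % 4 = 3) (hp7 : 7 ≤ p) :
    ∃ H : Matrix (Fin p) (Fin p) ℂ,
      IsCHadamard H ∧ IsCirculant H ∧ ¬ HadEquiv H (FourierMatrix p) := by
  have := Fact.mk hp
  have hcard : Fintype.card (ZMod p) % 4 = 3 := by rwa [ZMod.card]
  let e : Fin p ≃ ZMod p := (ZMod.finEquiv p).toEquiv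
  obtain ⟨n, hn⟩ := quadraticChar_exists_neg_one (ringChar_ne_two_of_card_mod_four hcard)
  have hinv : haagerupInvariant ((bjorckMatrix (ZMod p)).submatrix e e)
      (e.symm 0) (e.symm n) (e.symm n) (e.symm 0) = bjorckNumber p := by
    rw [haagerupInvariant_submatrix, e.apply_symm_apply, e.apply_symm_apply,
      haagerupInvariant_bjorckMatrix hcard hn, ZMod.card]
  refine ⟨(bjorckMatrix (ZMod p)).submatrix e e, (isCHadamard_bjorckMatrix hcard).submatrix e,
    ⟨bjorck (ZMod p) ∘ e, fun j k ↦ ?_⟩,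
    not_hadEquiv_fourierMatrix_of_haagerupInvariant_pow_ne_one hp.ne_zero
      (hinv ▸ bjorckNumber_pow_ne_one (by omega) hp.ne_zero)⟩
  simp [bjorckMatrix, e, map_sub]
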